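/- There exists a rank-1 word V such that the subshift X_V is not minimal and (X_V, σ) does not have finite topological rank, i.e. for no m ≥ 1 does the essentially minimal Cantor system (X_V, σ) have topological rank at most m. -/

import Mathlib

namespace SubshiftRank

/-! ### Words over the alphabet {0,1}; `false` plays the role of `0`, `true` of `1`. -/

abbrev Word := List Bool

/-- `ℱ`: the set of finite nonempty words over `{0,1}` beginning and ending with `0`. -/
def FF : Set Word := {w | w ≠ [] ∧ w.head? = some false ∧ w.getLast? = some false}

/-- `spacer s = 1^s`. -/
def spacer (s : ℕ) : Word := List.replicate s true

/-- A building: a sequence of words `v₁, …, v_k` with spacers `s₁, …, s_k` (the `pairs`),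
followed by a final word `v_{k+1}` (the `last`).  The assembled word is
`v₁1^{s₁}v₂1^{s₂}⋯v_k1^{s_k}v_{k+1}`. -/
structure Building where
  pairs : List (Word × ℕ)
  last : Word

/-- The word assembled by a building. -/
def Building.word (b : Building) : Word :=
  b.pairs.foldr (fun p acc => p.1 ++ spacer p.2 ++ acc) b.last

/-- The words `v₁, …, v_{k+1}` used in a building (in order). -/
def Building.pieces (b : Building) : List Word := b.pairs.map Prod.fst ++ [b.last]

/-- `b` is a building from the set `S`: there is at least one spacer (i.e. `k ≥ 1`, at least
two pieces) and all the pieces belong to `S`. -/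
def Building.FromSet (b : Building) (S : Set Word) : Prop :=
  b.pairs ≠ [] ∧ ∀ v ∈ b.pieces, v ∈ S

/-- The first word of a building. -/
def Building.firstPiece (b : Building) : Word := b.pieces.headI

/-- Every word of `S` is used in the building. -/
def Building.UsesAll (b : Building) (S : Set Word) : Prop := ∀ v ∈ S, v ∈ b.pieces

/-- The spacer parameter of the building is bounded by `M`. -/
def Building.SpacersLE (b : Building) (M : ℕ) : Prop := ∀ p ∈ b.pairs, p.2 ≤ M

/-- `w` is built from `S`. -/
def BuiltFrom (w : Word) (S : Set Word) : Prop := ∃ b : Building, b.FromSet S ∧ b.word = w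

/-- The `i`-th level `S_i = {v_{i,1}, …, v_{i,n_i}}` of a generating sequence. -/
def levelSet (ni : ℕ → ℕ) (wd : ℕ → ℕ → Word) (i : ℕ) : Set Word :=
  {w | ∃ j, 1 ≤ j ∧ j ≤ ni i ∧ wd i j = w}

/-- A (symbolic) rank-`n` construction: a rank-`n` generating sequence `v_{i,j}`
(`i ≥ 0`, `1 ≤ j ≤ n_i ≤ n`) together with, for each `i` and `1 ≤ j ≤ n_{i+1}`, one chosen
building of `v_{i+1,j}` from `S_i`, the building of `v_{i+1,1}` starting with `v_{i,1}`. -/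
structure RankConstruction (n : ℕ) where
  ni : ℕ → ℕ
  wd : ℕ → ℕ → Word
  bld : ℕ → ℕ → Building
  ni_pos : ∀ i, 1 ≤ ni i
  ni_le : ∀ i, ni i ≤ n
  mem_FF : ∀ i j, 1 ≤ j → j ≤ ni i → wd i j ∈ FF
  wd_zero : ∀ j, 1 ≤ j → j ≤ ni 0 → wd 0 j = [false]
  bld_from : ∀ i j, 1 ≤ j → j ≤ ni (i + 1) → (bld i j).FromSet (levelSet ni wd i)
  bld_word : ∀ i j, 1 ≤ j → j ≤ ni (i + 1) → (bld i j).word = wd (i + 1) j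
  bld_start : ∀ i, (bld i 1).firstPiece = wd i 1

/-- A rank-`n` construction is proper if `n_i = n` for all `i` and every word of `S_i` is used
in each chosen building. -/
def RankConstruction.Proper {n : ℕ} (c : RankConstruction n) : Prop :=
  (∀ i, c.ni i = n) ∧
    ∀ i j, 1 ≤ j → j ≤ c.ni (i + 1) → (c.bld i j).UsesAll (levelSet c.ni c.wd i)

/-- All spacer parameters of all chosen buildings are bounded by `M`. -/
def RankConstruction.SpacersBoundedBy {n : ℕ} (c : RankConstruction n) (M : ℕ) : Prop :=
  ∀ i j, 1 ≤ j → j ≤ c.ni (i + 1) → (c.bld i j).SpacersLE M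

/-- The spacer parameter of the construction is bounded. -/
def RankConstruction.BoundedSpacer {n : ℕ} (c : RankConstruction n) : Prop :=
  ∃ M, c.SpacersBoundedBy M

/-- `w` is of the form `α1^{s₁}v_{j₁}1^{s₂}v_{j₂}⋯v_{j_{k−1}}1^{s_k}β` where `k ≥ 1`, the
middle words belong to `S`, `α` is a nonempty suffix of a word of `S` and `β` is a nonempty
prefix of a word of `S`. -/
def BadDecomp (w : Word) (S : Set Word) : Prop :=
  ∃ (α β : Word) (mids : List (ℕ × Word)) (sk : ℕ),
    α ≠ [] ∧ β ≠ [] ∧ (∃ a ∈ S, α <:+ a) ∧ (∃ b ∈ S, β <+: b) ∧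
    (∀ p ∈ mids, p.2 ∈ S) ∧
    w = α ++ mids.foldr (fun p acc => spacer p.1 ++ p.2 ++ acc) (spacer sk ++ β)

/-- A rank-`n` construction is good if it is proper and no `v_{i,j}` has a bad decomposition
over `S_i`. -/
def RankConstruction.Good {n : ℕ} (c : RankConstruction n) : Prop :=
  c.Proper ∧ ∀ i j, 1 ≤ j → j ≤ c.ni i → ¬ BadDecomp (c.wd i j) (levelSet c.ni c.wd i)

/-- The finite word `w` is a prefix (initial segment) of the infinite word `V`. -/
def InfExtends (V : ℕ → Bool) (w : Word) : Prop := ∀ k, k < w.length → w.getD k false = V k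

/-- `V = lim_i v_{i,1}` is the infinite word determined by the construction. -/
def RankConstruction.HasLimit {n : ℕ} (c : RankConstruction n) (V : ℕ → Bool) : Prop :=
  (∀ i, InfExtends V (c.wd i 1)) ∧ ∀ m : ℕ, ∃ i, m ≤ (c.wd i 1).length

/-- The infinite word `V` has a rank-`n` construction. -/
def HasRankConstr (V : ℕ → Bool) (n : ℕ) : Prop := ∃ c : RankConstruction n, c.HasLimit V

/-! ### Occurrences and subshifts -/

/-- The finite word `u` occurs in the infinite word `V` at position `p`. -/
def OccursAtInf (u : Word) (V : ℕ → Bool) (p : ℕ) : Prop :=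
  ∀ k, k < u.length → u.getD k false = V (p + k)

/-- `u` is a subword of the infinite word `V`. -/
def OccursInInf (u : Word) (V : ℕ → Bool) : Prop := ∃ p, OccursAtInf u V p

/-- The finite word `u` occurs in the bi-infinite word `x` at position `p`. -/
def OccursAtBi (u : Word) (x : ℤ → Bool) (p : ℤ) : Prop :=
  ∀ k : ℕ, k < u.length → u.getD k false = x (p + (k : ℤ))

/-- `u` is a subword of the bi-infinite word `x`. -/
def OccursInBi (u : Word) (x : ℤ → Bool) : Prop := ∃ p, OccursAtBi u x p

/-- The Bernoulli shift `σ` on `{0,1}^ℤ`. -/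
def shift (x : ℤ → Bool) : ℤ → Bool := fun k => x (k + 1)

/-- The subshift generated by the infinite word `V`. -/
def XV (V : ℕ → Bool) : Set (ℤ → Bool) := {x | ∀ u : Word, OccursInBi u x → OccursInInf u V}

/-- The `σ`-orbit of `x`. -/
def sorbit (x : ℤ → Bool) : Set (ℤ → Bool) := Set.range fun n : ℤ => fun k => x (k + n)

/-- A subshift: a nonempty closed shift-invariant subset of `{0,1}^ℤ`. -/
def IsSubshift (X : Set (ℤ → Bool)) : Prop := X.Nonempty ∧ IsClosed X ∧ shift '' X = X

/-- A minimal subshift: every orbit is dense. -/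
def MinimalSubshift (X : Set (ℤ → Bool)) : Prop :=
  IsSubshift X ∧ ∀ x ∈ X, X ⊆ closure (sorbit x)

/-- `X` has symbolic rank at most `n`. -/
def SymbRankLE (X : Set (ℤ → Bool)) (n : ℕ) : Prop := ∃ V, HasRankConstr V n ∧ X = XV V

/-- `X` has symbolic rank exactly `n`. -/
def SymbRankEq (X : Set (ℤ → Bool)) (n : ℕ) : Prop :=
  SymbRankLE X n ∧ ∀ m, SymbRankLE X m → n ≤ m

/-- `M` is a minimal subset of the system `(X, shift)`: a nonempty closed shift-invariant
subset of `X` with no proper nonempty closed shift-invariant subset. -/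
def IsMinimalSubsetOf (X M : Set (ℤ → Bool)) : Prop :=
  M.Nonempty ∧ IsClosed M ∧ M ⊆ X ∧ shift '' M = M ∧
    ∀ M', M' ⊆ M → M'.Nonempty → IsClosed M' → shift '' M' = M' → M' = M

/-- A bi-infinite word `x` is built from `v`: there is a strictly increasing bi-infinite
sequence of positions, with consecutive gaps at least `|v|` and unbounded in both directions,
at each of which `v` occurs, and `x` equals `1` outside those occurrences. -/
def BiBuiltFrom (x : ℤ → Bool) (v : Word) : Prop :=
  ∃ pos : ℤ → ℤ, StrictMono pos ∧
    (∀ i : ℤ, pos i + (v.length : ℤ) ≤ pos (i + 1)) ∧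
    (∀ n : ℤ, ∃ i : ℤ, n < pos i) ∧ (∀ n : ℤ, ∃ i : ℤ, pos i < n) ∧
    (∀ i : ℤ, OccursAtBi v x (pos i)) ∧
    (∀ p : ℤ, (∀ i : ℤ, ¬ (pos i ≤ p ∧ p < pos i + (v.length : ℤ))) → x p = true)

/-! ### General topological dynamics on (Cantor) metric spaces -/

/-- Every orbit of `T` is dense. -/
def MinimalHomeo {X : Type*} [TopologicalSpace X] (T : X ≃ₜ X) : Prop :=
  ∀ x : X, Dense (Set.range fun n : ℤ => (T.toEquiv ^ n) x)

/-- The system `(X, T)` is equicontinuous. -/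
def EquicontinuousSys {X : Type*} [MetricSpace X] (T : X ≃ₜ X) : Prop :=
  ∀ ε : ℝ, 0 < ε → ∃ δ : ℝ, 0 < δ ∧
    ∀ (n : ℤ) (x y : X), dist x y < δ → dist ((T.toEquiv ^ n) x) ((T.toEquiv ^ n) y) < ε

/-- `M` is a minimal set of `(X, T)`. -/
def IsMinimalSet {X : Type*} [TopologicalSpace X] (T : X → X) (M : Set X) : Prop :=
  M.Nonempty ∧ IsClosed M ∧ T '' M = M ∧
    ∀ M', M' ⊆ M → M'.Nonempty → IsClosed M' → T '' M' = M' → M' = M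

/-- `(X, T)` is essentially minimal: it has a unique minimal set. -/
def EssentiallyMinimal {X : Type*} [TopologicalSpace X] (T : X → X) : Prop :=
  ∃! M, IsMinimalSet T M

/-- `A` has the finite covering property: `⋃_{−N ≤ n ≤ N} T^n A = X` for some `N`. -/
def FiniteCovering {X : Type*} [TopologicalSpace X] (T : X ≃ₜ X) (A : Set X) : Prop :=
  ∃ N : ℕ, (⋃ n ∈ Finset.Icc (-(N : ℤ)) (N : ℤ), ⇑(T.toEquiv ^ n) '' A) = Set.univ

/-- A finite partition of the whole space into clopen sets. -/
def IsClopenPartition {X : Type*} [TopologicalSpace X] (Q : Finset (Set X)) : Prop :=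
  (∀ q ∈ Q, IsClopen q) ∧ (⋃ q ∈ Q, q) = Set.univ ∧
    ∀ q ∈ Q, ∀ q' ∈ Q, q ≠ q' → Disjoint q q'

/-- A Kakutani–Rohlin partition of `(X, T)`: clopen bases `B 0, …, B (d−1)` with heights
`h 0, …, h (d−1)` such that the sets `T^j (B k)` (`j < h k`) form a partition of `X` and
`⋃_k T^{h k} (B k) = ⋃_k B k`. -/
structure KRPart {X : Type*} [TopologicalSpace X] (T : X → X) where
  d : ℕ
  B : Fin d → Set X
  h : Fin d → ℕ
  d_pos : 0 < d
  h_pos : ∀ k, 0 < h k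
  clopen : ∀ k, IsClopen (B k)
  disj : ∀ (k k' : Fin d) (j j' : ℕ), j < h k → j' < h k' → (k, j) ≠ (k', j') →
    Disjoint (T^[j] '' B k) (T^[j'] '' B k')
  cover : (⋃ k, ⋃ j ∈ Finset.range (h k), T^[j] '' B k) = Set.univ
  base_eq : (⋃ k, T^[h k] '' B k) = ⋃ k, B k

/-- The base of a Kakutani–Rohlin partition. -/
def KRPart.base {X : Type*} [TopologicalSpace X] {T : X → X} (P : KRPart T) : Set X :=
  ⋃ k, P.B k

/-- `(X, T)` has topological rank at most `m` (Kakutani–Rohlin characterization). -/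
def TopRankLEGen {X : Type*} [MetricSpace X] (T : X → X) (m : ℕ) : Prop :=
  ∃ x : X, ∀ ε : ℝ, 0 < ε → ∃ P : KRPart T, P.d ≤ m ∧
    (∀ (k : Fin P.d) (j : ℕ), j < P.h k → Metric.diam (T^[j] '' P.B k) < ε) ∧
    Metric.diam P.base < ε ∧ x ∈ P.base

/-! ### Kakutani–Rohlin partitions and topological rank for subshifts -/

/-- A Kakutani–Rohlin partition of the subshift `(X, σ)`. -/
structure KRPartOn (X : Set (ℤ → Bool)) where
  d : ℕ
  B : Fin d → Set (ℤ → Bool)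
  h : Fin d → ℕ
  d_pos : 0 < d
  h_pos : ∀ k, 0 < h k
  subset : ∀ k, B k ⊆ X
  clopen : ∀ k, IsClopen {y : X | (y : ℤ → Bool) ∈ B k}
  disj : ∀ (k k' : Fin d) (j j' : ℕ), j < h k → j' < h k' → (k, j) ≠ (k', j') →
    Disjoint (shift^[j] '' B k) (shift^[j'] '' B k')
  cover : (⋃ k, ⋃ j ∈ Finset.range (h k), shift^[j] '' B k) = X
  base_eq : (⋃ k, shift^[h k] '' B k) = ⋃ k, B k

/-- The base of a Kakutani–Rohlin partition of a subshift. -/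
def KRPartOn.base {X : Set (ℤ → Bool)} (P : KRPartOn X) : Set (ℤ → Bool) := ⋃ k, P.B k

/-- All elements of `A` agree on the window `[−N, N]`; for the canonical metric on `2^ℤ`
this says exactly that `diam(A) ≤ 2^{−N}`. -/
def AgreeOn (N : ℕ) (A : Set (ℤ → Bool)) : Prop :=
  ∀ y ∈ A, ∀ z ∈ A, ∀ k : ℤ, |k| ≤ (N : ℤ) → y k = z k

/-- The subshift `(X, σ)` has topological rank at most `m` (Kakutani–Rohlin
characterization, with smallness of diameters expressed by agreement on windows,
matching the canonical compatible metric on `2^ℤ`). -/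
def TopRankLE (X : Set (ℤ → Bool)) (m : ℕ) : Prop :=
  ∃ x ∈ X, ∀ N : ℕ, ∃ P : KRPartOn X, P.d ≤ m ∧
    (∀ (k : Fin P.d) (j : ℕ), j < P.h k → AgreeOn N (shift^[j] '' P.B k)) ∧
    AgreeOn N P.base ∧ x ∈ P.base

/-! ### Factor maps and conjugacy -/

/-- `φ` is a (topological) factor map from the subshift `Y` onto the subshift `X`. -/
def IsFactorMapOn (Y X : Set (ℤ → Bool)) (φ : (ℤ → Bool) → (ℤ → Bool)) : Prop :=
  ContinuousOn φ Y ∧ φ '' Y = X ∧ ∀ y ∈ Y, φ (shift y) = shift (φ y)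

/-- `X` is a topological factor of `Y`. -/
def SubshiftFactor (Y X : Set (ℤ → Bool)) : Prop := ∃ φ, IsFactorMapOn Y X φ

/-- The subshifts `Y` and `X` are conjugate. -/
def SubshiftConjugate (Y X : Set (ℤ → Bool)) : Prop :=
  ∃ φ, IsFactorMapOn Y X φ ∧ Set.InjOn φ Y

/-- `(X, T)` is conjugate to the subshift `(Y, σ)`. -/
def ConjugateToSubshift {X : Type*} [TopologicalSpace X] (T : X ≃ₜ X) (Y : Set (ℤ → Bool)) :
    Prop :=
  ∃ φ : X → (ℤ → Bool), Continuous φ ∧ Function.Injective φ ∧ Set.range φ = Y ∧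
    ∀ x, φ (T x) = shift (φ x)

/-- The Boolean algebra of sets generated by `G`. -/
inductive GenBoolAlg {X : Type*} (G : Set (Set X)) : Set X → Prop
  | basic (A : Set X) : A ∈ G → GenBoolAlg G A
  | empty : GenBoolAlg G ∅
  | compl (A : Set X) : GenBoolAlg G A → GenBoolAlg G Aᶜ
  | union (A B : Set X) : GenBoolAlg G A → GenBoolAlg G B → GenBoolAlg G (A ∪ B)

/-- `(T, A)` is generating: the smallest Boolean algebra containing all `T^n A` contains
every clopen set. -/
def Generating {X : Type*} [TopologicalSpace X] (T : X ≃ₜ X) (A : Set X) : Prop :=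
  ∀ U : Set X, IsClopen U → GenBoolAlg {B : Set X | ∃ n : ℤ, B = ⇑(T.toEquiv ^ n) '' A} U

/-- The return-times word `Ret_A(x₀) ∈ 2^ℤ` of `x₀` to `A`. -/
noncomputable def retWord {X : Type*} [TopologicalSpace X] (T : X ≃ₜ X) (A : Set X) (x₀ : X) : ℤ → Bool :=
  fun n => @ite _ ((T.toEquiv ^ n) x₀ ∈ A) (Classical.propDecidable _) true false

/-!
`V` is the limit of `v₀ = 0`, `v_{n+1} = v_n 1^{c_n} v_n 1^{s_n} v_n`, where every odd number is
`c_n` for infinitely many `n` and `s_n` is even and longer than `c_n` and `v_n`. The long gaps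
`1^{s_n}` put the fixed point `1^∞` into `X_V`, so `X_V` is not minimal.

If a Kakutani–Rohlin partition has a base of small diameter, then `1^∞` lies in the base, so all
base points are `1` on a long window `[-N, N]` and every `0` of a point is far from both ends of
its tower column. With at most `m` towers, two of the `m + 1` points `1^∞ v_M 1^{c_M} v_M ⋯` with
gaps `c_M = 1, 3, …, 2m + 1` have columns in the same tower; as the levels are small, both columns
read the same word, which contains both junctions `0 1^{c_M} 0`. But a maximal run of `1`s of odd
length `r` inside `V` is a first gap `1^{c_k}` with `c_k = r`, so it is followed by `v_k` and a run
longer than `r`, whereas after the junction of level `M` the word continues with `V` itself, which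
has a `0` there.
-/

def oddGap (n : ℕ) : ℕ := 2 * (Nat.unpair n).1 + 1

def vWord : ℕ → Word
  | 0 => [false]
  | n + 1 => vWord n ++ spacer (oddGap n) ++ vWord n ++
      spacer (2 * ((vWord n).length + oddGap n + 1)) ++ vWord n

def vLen (n : ℕ) : ℕ := (vWord n).length

def evenGap (n : ℕ) : ℕ := 2 * (vLen n + oddGap n + 1)

def limitWord (k : ℕ) : Bool := (vWord (k + 1)).getD k false

lemma vWord_succ (n : ℕ) :
    vWord (n + 1) = vWord n ++ spacer (oddGap n) ++ vWord n ++ spacer (evenGap n) ++ vWord n :=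
  rfl

lemma oddGap_odd (n : ℕ) : Odd (oddGap n) := odd_two_mul_add_one _

lemma evenGap_even (n : ℕ) : Even (evenGap n) := even_two_mul _

lemma oddGap_lt_evenGap (n : ℕ) : oddGap n < evenGap n := by
  unfold evenGap; omega

lemma vLen_succ (n : ℕ) : vLen (n + 1) = 3 * vLen n + oddGap n + evenGap n := by
  simp only [vLen, vWord_succ, spacer, List.length_append, List.length_replicate]
  ring

lemma succ_le_vLen (n : ℕ) : n + 1 ≤ vLen n := by
  induction n with
  | zero => rfl
  | succ n ih => rw [vLen_succ]; unfold oddGap; omega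

lemma vWord_prefix_of_le {n n' : ℕ} (h : n ≤ n') : vWord n <+: vWord n' := by
  induction n', h using Nat.le_induction with
  | base => exact List.prefix_refl _
  | succ n' _ ih =>
    exact ih.trans (by simp only [vWord_succ, List.append_assoc]; exact List.prefix_append _ _)

lemma limitWord_eq_getD {n k : ℕ} (hk : k < vLen n) : limitWord k = (vWord n).getD k false := by
  have hk' : k < vLen (k + 1) := by have := succ_le_vLen (k + 1); omega
  rcases le_total (k + 1) n with h | h
  · obtain ⟨t, ht⟩ := vWord_prefix_of_le h
    rw [limitWord, ← ht, List.getD_append _ _ _ _ hk']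
  · obtain ⟨t, ht⟩ := vWord_prefix_of_le h
    rw [limitWord, ← ht, List.getD_append _ _ _ _ hk]

lemma limitWord_zero : limitWord 0 = false := rfl

lemma limitWord_of_vLen_le {n k : ℕ} (h : vLen n ≤ k) (hk : k < vLen (n + 1)) :
    limitWord k =
      if k < vLen n + oddGap n then true
      else if k < 2 * vLen n + oddGap n then limitWord (k - (vLen n + oddGap n))
      else if k < 2 * vLen n + oddGap n + evenGap n then true
      else limitWord (k - (2 * vLen n + oddGap n + evenGap n)) := by
  have := vLen_succ n
  rw [limitWord_eq_getD hk, vWord_succ]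
  split_ifs <;> (try rw [limitWord_eq_getD (n := n) (by omega)]) <;>
    simp only [vLen, List.getD_eq_getElem?_getD, List.getElem?_append, spacer,
      List.getElem?_replicate, List.length_append, List.length_replicate] at * <;>
    split_ifs <;> first | omega | rfl | (congr 2; omega)

lemma limitWord_firstGap {n i : ℕ} (hi : i < oddGap n) : limitWord (vLen n + i) = true := by
  rw [limitWord_of_vLen_le (n := n) (by omega) (by rw [vLen_succ]; omega), if_pos (by omega)]

lemma limitWord_secondCopy {n i : ℕ} (hi : i < vLen n) :
    limitWord (vLen n + oddGap n + i) = limitWord i := by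
  rw [limitWord_of_vLen_le (n := n) (by omega) (by rw [vLen_succ]; omega), if_neg (by omega),
    if_pos (by omega), Nat.add_sub_cancel_left]

lemma limitWord_secondGap {n i : ℕ} (hi : i < evenGap n) :
    limitWord (2 * vLen n + oddGap n + i) = true := by
  rw [limitWord_of_vLen_le (n := n) (by omega) (by rw [vLen_succ]; omega), if_neg (by omega),
    if_neg (by omega), if_pos (by omega)]

lemma limitWord_thirdCopy {n i : ℕ} (hi : i < vLen n) :
    limitWord (2 * vLen n + oddGap n + evenGap n + i) = limitWord i := by
  rw [limitWord_of_vLen_le (n := n) (by omega) (by rw [vLen_succ]; omega), if_neg (by omega),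
    if_neg (by omega), if_neg (by omega), Nat.add_sub_cancel_left]

lemma limitWord_vLen_sub_one (n : ℕ) : limitWord (vLen n - 1) = false := by
  induction n with
  | zero => rfl
  | succ n ih =>
    have := succ_le_vLen n
    rw [show vLen (n + 1) - 1 = 2 * vLen n + oddGap n + evenGap n + (vLen n - 1) by
      rw [vLen_succ]; omega, limitWord_thirdCopy (by omega), ih]

lemma mem_copies_of_limitWord_eq_false {n k : ℕ} (hk : k < vLen (n + 1))
    (h : limitWord k = false) : k < vLen n ∨
      vLen n + oddGap n ≤ k ∧ k < 2 * vLen n + oddGap n ∨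
      2 * vLen n + oddGap n + evenGap n ≤ k := by
  by_contra! hcopy
  rw [limitWord_of_vLen_le hcopy.1 hk] at h
  split_ifs at h <;> omega

def IsRunAt (f : ℕ → Bool) (q r : ℕ) : Prop :=
  f q = false ∧ (∀ i < r, f (q + 1 + i) = true) ∧ f (q + 1 + r) = false

lemma IsRunAt.le_or_le {f : ℕ → Bool} {q r z : ℕ} (h : IsRunAt f q r) (hz : f z = false) :
    z ≤ q ∨ q + 1 + r ≤ z := by
  by_contra! hzq
  have := h.2.1 (z - (q + 1)) (by omega)
  rw [show q + 1 + (z - (q + 1)) = z by omega, hz] at this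
  exact Bool.false_ne_true this

lemma IsRunAt.unique {f : ℕ → Bool} {q r r' : ℕ} (h : IsRunAt f q r) (h' : IsRunAt f q r') :
    r = r' := by
  have := h.le_or_le h'.2.2
  have := h'.le_or_le h.2.2
  omega

lemma isRunAt_add_iff {f g : ℕ → Bool} {a a' h q r : ℕ} (hfg : ∀ w < h, f (a + w) = g (a' + w))
    (hq : q + 1 + r < h) : IsRunAt f (a + q) r ↔ IsRunAt g (a' + q) r := by
  unfold IsRunAt
  rw [hfg q (by omega), show f (a + q + 1 + r) = g (a' + q + 1 + r) by
    simpa only [add_assoc] using hfg (q + 1 + r) hq]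
  refine and_congr_right' (and_congr_left' (forall₂_congr fun i hi => ?_))
  rw [show f (a + q + 1 + i) = g (a' + q + 1 + i) by
    simpa only [add_assoc] using hfg (q + 1 + i) (by omega)]

lemma exists_junction_of_copy {n a q r : ℕ}
    (hcopy : ∀ i < vLen n, limitWord (a + i) = limitWord i) (hqr : q + 1 + r < vLen n)
    (hrun : IsRunAt limitWord (a + q) r)
    (ih : IsRunAt limitWord q r → q + 1 + r < vLen n → ∃ k, oddGap k = r ∧
      q + 1 + r + vLen k + r < vLen n ∧ limitWord (q + 1 + r + vLen k + r) = true) :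
    ∃ k, oddGap k = r ∧ a + q + 1 + r + vLen k + r < a + vLen n ∧
      limitWord (a + q + 1 + r + vLen k + r) = true := by
  have hrun' := (isRunAt_add_iff (a' := 0) (by simpa using hcopy) hqr).1 hrun
  rw [zero_add] at hrun'
  obtain ⟨k, hk, hlt, htrue⟩ := ih hrun' hqr
  refine ⟨k, hk, by omega, ?_⟩
  rw [show a + q + 1 + r + vLen k + r = a + (q + 1 + r + vLen k + r) by ring, hcopy _ hlt, htrue]

/-- An odd maximal run `1^r` inside `v_n` is the first gap `1^{c_k}` of some `v_{k+1}`, so after it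
come `v_k` and more than `r` further `1`s. -/
theorem exists_junction_of_isRunAt {r : ℕ} (hr : Odd r) (n : ℕ) :
    ∀ q, IsRunAt limitWord q r → q + 1 + r < vLen n → ∃ k, oddGap k = r ∧
      q + 1 + r + vLen k + r < vLen n ∧ limitWord (q + 1 + r + vLen k + r) = true := by
  induction n with
  | zero => intro q _ h; exact absurd h (by simp [vLen, vWord])
  | succ n ih =>
    intro q hrun hqr
    have := vLen_succ n
    have := succ_le_vLen n
    have := oddGap_lt_evenGap n
    have hq := mem_copies_of_limitWord_eq_false (n := n) (by omega) hrun.1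
    have hqr' := mem_copies_of_limitWord_eq_false hqr hrun.2.2
    have z₁ := hrun.le_or_le (limitWord_vLen_sub_one n)
    have z₂ := hrun.le_or_le (z := vLen n + oddGap n + 0) (by
      rw [limitWord_secondCopy (by omega)]; rfl)
    have z₃ := hrun.le_or_le (z := 2 * vLen n + oddGap n - 1) (by
      rw [show 2 * vLen n + oddGap n - 1 = vLen n + oddGap n + (vLen n - 1) by omega,
        limitWord_secondCopy (by omega), limitWord_vLen_sub_one])
    have z₄ := hrun.le_or_le (z := 2 * vLen n + oddGap n + evenGap n + 0) (by
      rw [limitWord_thirdCopy (by omega)]; rfl)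
    -- The `0`s that end and start the copies of `v_n` confine the run to one copy or to a gap.
    rcases (by omega : q + 1 + r < vLen n ∨ (q + 1 = vLen n ∧ r = oddGap n) ∨
      (vLen n + oddGap n ≤ q ∧ q + 1 + r < 2 * vLen n + oddGap n) ∨ r = evenGap n ∨
      2 * vLen n + oddGap n + evenGap n ≤ q) with hA | ⟨hq, rfl⟩ | hC | rfl | hE
    · obtain ⟨k, hk, hlt, htrue⟩ := ih q hrun hA
      exact ⟨k, hk, by omega, htrue⟩
    · refine ⟨n, rfl, by omega, ?_⟩
      rw [hq, show vLen n + oddGap n + vLen n + oddGap n = 2 * vLen n + oddGap n + oddGap n by ring]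
      exact limitWord_secondGap (by omega)
    · obtain ⟨q, rfl⟩ : ∃ q', q = vLen n + oddGap n + q' := ⟨q - (vLen n + oddGap n), by omega⟩
      obtain ⟨k, hk, hlt, htrue⟩ :=
        exists_junction_of_copy (fun _ => limitWord_secondCopy) (by omega) hrun (ih q)
      exact ⟨k, hk, by omega, htrue⟩
    · exact absurd (evenGap_even n) (Nat.not_even_iff_odd.2 hr)
    · obtain ⟨q, rfl⟩ : ∃ q', q = 2 * vLen n + oddGap n + evenGap n + q' :=
        ⟨q - (2 * vLen n + oddGap n + evenGap n), by omega⟩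
      obtain ⟨k, hk, hlt, htrue⟩ :=
        exists_junction_of_copy (fun _ => limitWord_thirdCopy) (by omega) hrun (ih q)
      exact ⟨k, hk, by omega, htrue⟩

lemma isRunAt_junction (M : ℕ) : IsRunAt limitWord (vLen M - 1) (oddGap M) := by
  have := succ_le_vLen M
  refine ⟨limitWord_vLen_sub_one M, fun i hi => ?_, ?_⟩
  · rw [show vLen M - 1 + 1 + i = vLen M + i by omega]
    exact limitWord_firstGap hi
  · rw [show vLen M - 1 + 1 + oddGap M = vLen M + oddGap M + 0 by omega,
      limitWord_secondCopy (by omega)]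
    rfl

lemma junction_windows_disagree_of_le {M M' a a' p p' h : ℕ} (hgap : oddGap M ≠ oddGap M')
    (ha : a + p + 1 = vLen M) (ha' : a' + p' + 1 = vLen M') (hpp : p ≤ p')
    (hp : p + 1 + oddGap M < h) (hp' : p' + 1 + oddGap M' < h) (hhM : h ≤ vLen M) :
    ¬ ∀ w < h, limitWord (a + w) = limitWord (a' + w) := by
  intro hag
  have hrun : IsRunAt limitWord (a + p) (oddGap M) := by
    rw [show a + p = vLen M - 1 by omega]; exact isRunAt_junction M
  have hrun' : IsRunAt limitWord (a' + p') (oddGap M') := by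
    rw [show a' + p' = vLen M' - 1 by omega]; exact isRunAt_junction M'
  rcases hpp.eq_or_lt with rfl | hlt
  · exact hgap (hrun.unique ((isRunAt_add_iff hag hp').2 hrun'))
  -- The final `0` of the first `v_{M'}` shows that the level-`M` run lies inside that `v_{M'}`.
  have hsep := hrun.le_or_le (z := a + p') (by
    rw [hag p' (by omega), show a' + p' = vLen M' - 1 by omega]
    exact limitWord_vLen_sub_one M')
  obtain ⟨k, hk, hlt', htrue⟩ := exists_junction_of_isRunAt (oddGap_odd M) M' _
    ((isRunAt_add_iff hag hp).1 hrun) (by omega)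
  have := succ_le_vLen k
  have hw := hag (p + 1 + oddGap M + vLen k + oddGap M) (by omega)
  rw [show a + (p + 1 + oddGap M + vLen k + oddGap M) = vLen M + oddGap M + (vLen k + oddGap k + 0)
    by omega, limitWord_secondCopy (by omega), limitWord_secondCopy (by omega),
    show a' + (p + 1 + oddGap M + vLen k + oddGap M) = a' + p + 1 + oddGap M + vLen k + oddGap M
    by ring, htrue] at hw
  exact Bool.false_ne_true hw

lemma junction_windows_disagree {M M' p p' h : ℕ} (hgap : oddGap M ≠ oddGap M')
    (hp : p + 1 + oddGap M < h) (hp' : p' + 1 + oddGap M' < h)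
    (hhM : h ≤ vLen M) (hhM' : h ≤ vLen M') :
    ¬ ∀ w < h, limitWord (vLen M - 1 - p + w) = limitWord (vLen M' - 1 - p' + w) := by
  have ha : vLen M - 1 - p + p + 1 = vLen M := by omega
  have ha' : vLen M' - 1 - p' + p' + 1 = vLen M' := by omega
  rcases le_total p p' with hpp | hpp
  · exact junction_windows_disagree_of_le hgap ha ha' hpp hp hp' hhM
  · exact fun hag => junction_windows_disagree_of_le hgap.symm ha' ha hpp hp' hp hhM'
      fun w hw => (hag w hw).symm

def shiftBy (x : ℤ → Bool) (t : ℤ) : ℤ → Bool := fun k => x (k + t)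

lemma shift_injective : Function.Injective shift := fun x y h => funext fun k => by
  simpa [shift] using congrFun h (k - 1)

lemma iterate_shift (n : ℕ) (x : ℤ → Bool) : shift^[n] x = shiftBy x n := by
  induction n generalizing x with
  | zero => funext k; simp [shiftBy]
  | succ n ih =>
    funext k
    rw [Function.iterate_succ_apply, ih]
    simp only [shiftBy, shift, Nat.cast_succ]
    ring_nf

lemma shiftBy_mem_XV {V : ℕ → Bool} {x : ℤ → Bool} (hx : x ∈ XV V) (t : ℤ) :
    shiftBy x t ∈ XV V := by
  rintro u ⟨p, hp⟩
  refine hx u ⟨p + t, fun k hk => ?_⟩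
  rw [hp k hk, shiftBy, add_right_comm]

def onesThen (V : ℕ → Bool) : ℤ → Bool := fun t => if 0 ≤ t then V t.toNat else true

lemma const_true_mem_XV {V : ℕ → Bool} (h : ∀ a, ∃ π, ∀ k < a, V (π + k) = true) :
    (fun _ => true) ∈ XV V := by
  rintro u ⟨p, hp⟩
  obtain ⟨π, hπ⟩ := h u.length
  exact ⟨π, fun k hk => (hp k hk).trans (hπ k hk).symm⟩

lemma onesThen_mem_XV {V : ℕ → Bool}
    (h : ∀ a d, ∃ π, (∀ k < a, V (π + k) = true) ∧ ∀ k < d, V (π + a + k) = V k) :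
    onesThen V ∈ XV V := by
  rintro u ⟨p, hp⟩
  obtain ⟨π, hones, hprefix⟩ := h (-p).toNat u.length
  rcases le_or_gt 0 p with hp0 | hp0
  · refine ⟨p.toNat, fun k hk => ?_⟩
    rw [hp k hk, onesThen, if_pos (by omega)]
    congr 1
    omega
  · refine ⟨π, fun k hk => ?_⟩
    rw [hp k hk, onesThen]
    split_ifs with hk0
    · rw [show (p + k).toNat = k - (-p).toNat by omega, ← hprefix _ (by omega)]
      congr 1
      omega
    · exact (hones k (by omega)).symm

lemma exists_ones_then_prefix (a d : ℕ) : ∃ π, (∀ k < a, limitWord (π + k) = true) ∧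
    ∀ k < d, limitWord (π + a + k) = limitWord k := by
  have := succ_le_vLen (a + d)
  have hs : a ≤ evenGap (a + d) := by unfold evenGap; omega
  refine ⟨2 * vLen (a + d) + oddGap (a + d) + (evenGap (a + d) - a), fun k hk => ?_, fun k hk => ?_⟩
  · rw [add_assoc]
    exact limitWord_secondGap (by omega)
  · rw [show 2 * vLen (a + d) + oddGap (a + d) + (evenGap (a + d) - a) + a + k =
      2 * vLen (a + d) + oddGap (a + d) + evenGap (a + d) + k by omega]
    exact limitWord_thirdCopy (by omega)

lemma const_true_mem_XV_limitWord : (fun _ => true) ∈ XV limitWord :=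
  const_true_mem_XV fun a => (exists_ones_then_prefix a 0).imp fun _ h => h.1

/-- `1^∞ v_M 1^{c_M} v_M ⋯`, positioned so that the last letter of the first `v_M` is at `0`. -/
def junctionPoint (M : ℕ) : ℤ → Bool := shiftBy (onesThen limitWord) (vLen M - 1 : ℕ)

lemma junctionPoint_mem (M : ℕ) : junctionPoint M ∈ XV limitWord :=
  shiftBy_mem_XV (onesThen_mem_XV exists_ones_then_prefix) _

lemma junctionPoint_apply {M j : ℕ} (hj : j < vLen M) (w : ℕ) :
    junctionPoint M (w - j) = limitWord (vLen M - 1 - j + w) := by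
  rw [junctionPoint, shiftBy, onesThen, if_pos (by omega)]
  congr 1
  omega

lemma junctionPoint_zero (M : ℕ) : junctionPoint M 0 = false := by
  simpa using (junctionPoint_apply (j := 0) (by have := succ_le_vLen M; omega) 0).trans
    (limitWord_vLen_sub_one M)

namespace KRPartOn

variable {X : Set (ℤ → Bool)} (P : KRPartOn X)

lemma exists_iterate_eq {y : ℤ → Bool} (hy : y ∈ X) :
    ∃ k, ∃ j < P.h k, ∃ b ∈ P.B k, shift^[j] b = y := by
  rw [← P.cover] at hy
  simpa only [Set.mem_iUnion, Finset.mem_range, Set.mem_image, exists_prop] using hy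

lemma mem_base_of_shift_eq {y : ℤ → Bool} (hy : y ∈ X) (hfix : shift y = y) : y ∈ P.base := by
  obtain ⟨k, j, -, b, hb, hby⟩ := P.exists_iterate_eq hy
  obtain rfl : b = y :=
    shift_injective.iterate j (hby.trans (Function.iterate_fixed hfix j).symm)
  exact Set.mem_iUnion.2 ⟨k, hb⟩

lemma exists_long_column {N : ℕ} (hones : ∀ b ∈ P.base, ∀ u : ℤ, |u| ≤ N → b u = true)
    {y : ℤ → Bool} (hy : y ∈ X) (hy0 : y 0 = false) :
    ∃ k j, j + N < P.h k ∧ ∀ w < P.h k, shiftBy y (w - j) ∈ shift^[w] '' P.B k := by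
  obtain ⟨k, j, hj, b, hb, rfl⟩ := P.exists_iterate_eq hy
  refine ⟨k, j, ?_, fun w _ => ⟨b, hb, ?_⟩⟩
  · have hret : shift^[P.h k] b ∈ P.base := by
      rw [KRPartOn.base, ← P.base_eq]
      exact Set.mem_iUnion.2 ⟨k, Set.mem_image_of_mem _ hb⟩
    by_contra! hshort
    have := hones _ hret (j - P.h k) (by rw [abs_le]; omega)
    simp only [iterate_shift, shiftBy, sub_add_cancel, zero_add] at this hy0
    exact Bool.false_ne_true (hy0.symm.trans this)
  · funext t
    simp only [iterate_shift, shiftBy]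
    ring_nf

lemma apply_eq_of_columns {N : ℕ}
    (hlev : ∀ (k : Fin P.d) (j : ℕ), j < P.h k → AgreeOn N (shift^[j] '' P.B k))
    {k : Fin P.d} {y y' : ℤ → Bool} {j j' : ℕ}
    (hy : ∀ w < P.h k, shiftBy y (w - j) ∈ shift^[w] '' P.B k)
    (hy' : ∀ w < P.h k, shiftBy y' (w - j') ∈ shift^[w] '' P.B k) {w : ℕ} (hw : w < P.h k) :
    y (w - j) = y' (w - j') := by
  simpa [shiftBy] using hlev k w hw _ (hy w hw) _ (hy' w hw) 0 (by simp)

end KRPartOn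

theorem not_topRankLE (m : ℕ) : ¬ TopRankLE (XV limitWord) m := by
  rintro ⟨_, -, hrank⟩
  -- A window `[-(2m + 2), 2m + 2]` makes each column contain its whole junction `0 1^{2i+1} 0`.
  obtain ⟨P, hd, hlev, hbase, -⟩ := hrank (2 * m + 2)
  have hones : ∀ b ∈ P.base, ∀ u : ℤ, |u| ≤ (2 * m + 2 : ℕ) → b u = true := fun b hb =>
    hbase b hb _ (P.mem_base_of_shift_eq const_true_mem_XV_limitWord rfl)
  obtain ⟨H, hH⟩ : ∃ H, ∀ k, P.h k ≤ H :=
    ⟨Finset.univ.sup P.h, fun k => Finset.le_sup (Finset.mem_univ k)⟩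
  let M (i : Fin (m + 1)) : ℕ := Nat.pair i H
  have hgap (i : Fin (m + 1)) : oddGap (M i) = 2 * i + 1 := by simp [M, oddGap]
  have hlen (i : Fin (m + 1)) : H < vLen (M i) :=
    (Nat.right_le_pair _ _).trans_lt (succ_le_vLen _)
  choose k j hj hcol using fun i => P.exists_long_column hones (junctionPoint_mem (M i))
    (junctionPoint_zero _)
  obtain ⟨i, i', hne, hk⟩ :=
    Fintype.exists_ne_map_eq_of_card_lt k (by simpa using hd.trans_lt m.lt_succ_self)
  have hne_gap : oddGap (M i) ≠ oddGap (M i') := by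
    rw [hgap, hgap]; exact fun h => hne (Fin.ext (by omega))
  have := hH (k i)
  have := hj i
  have := hk ▸ hj i'
  have := hlen i
  have := hlen i'
  refine junction_windows_disagree (p := j i) (p' := j i') (h := P.h (k i)) hne_gap
    (by rw [hgap]; omega) (by rw [hgap]; omega) (by omega) (by omega) fun w hw => ?_
  rw [← junctionPoint_apply (by omega), ← junctionPoint_apply (by omega)]
  exact P.apply_eq_of_columns hlev (hcol i) (hk ▸ hcol i') hw

theorem not_minimal : ¬ ∀ x ∈ XV limitWord, XV limitWord ⊆ closure (sorbit x) := by
  intro hmin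
  have hfix : sorbit (fun _ => true) = {fun _ => true} :=
    Set.eq_singleton_iff_unique_mem.2 ⟨⟨0, rfl⟩, by rintro _ ⟨n, rfl⟩; rfl⟩
  have h := hmin _ const_true_mem_XV_limitWord (junctionPoint_mem 0)
  rw [hfix, isClosed_singleton.closure_eq] at h
  simpa [junctionPoint_zero] using congrFun h 0

lemma vWord_mem_FF (n : ℕ) : vWord n ∈ FF := by
  induction n with
  | zero => simp [FF, vWord]
  | succ n ih =>
    obtain ⟨hne, hhead, hlast⟩ := ih
    refine ⟨by simp [vWord_succ, hne], ?_, ?_⟩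
    · simp [vWord_succ, List.head?_append, hhead]
    · simp [vWord_succ, List.getLast?_append, hlast]

def rankOneConstruction : RankConstruction 1 where
  ni _ := 1
  wd i _ := vWord i
  bld i _ := ⟨[(vWord i, oddGap i), (vWord i, evenGap i)], vWord i⟩
  ni_pos _ := le_rfl
  ni_le _ := le_rfl
  mem_FF i _ _ _ := vWord_mem_FF i
  wd_zero _ _ _ := rfl
  bld_from i _ _ _ := ⟨List.cons_ne_nil _ _, fun v hv => ⟨1, le_rfl, le_rfl, by
    simp only [Building.pieces, List.map_cons, List.map_nil, List.cons_append, List.nil_append,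
      List.mem_cons, List.not_mem_nil, or_false] at hv
    rcases hv with rfl | rfl | rfl <;> rfl⟩⟩
  bld_word i _ _ _ := by simp [Building.word, vWord_succ]
  bld_start _ := rfl

lemma hasRankConstr_limitWord : HasRankConstr limitWord 1 :=
  ⟨rankOneConstruction, fun _ _ hk => (limitWord_eq_getD hk).symm,
    fun m => ⟨m, (Nat.le_succ m).trans (succ_le_vLen m)⟩⟩

/-- Proposition 6.10. There is a rank-1 word `V` such that `X_V` is not
minimal and `(X_V, σ)` does not have finite topological rank. -/
theorem statement_14 :
    ∃ V : ℕ → Bool, HasRankConstr V 1 ∧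
      ¬ (∀ x ∈ XV V, XV V ⊆ closure (sorbit x)) ∧
      ∀ m : ℕ, 1 ≤ m → ¬ TopRankLE (XV V) m :=
  ⟨limitWord, hasRankConstr_limitWord, not_minimal, fun m _ => not_topRankLE m⟩

end SubshiftRank
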